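/- arXiv:math/0109051 — 4 statements merged into one kernel-verified Lean document; each statement's English description precedes it below -/
import Mathlib

section
/- Let A be an n×n complex matrix. There exists a unitary U such that U A U* is tridiagonal if and only if there exists a flag 0 = W₀ ⊂ W₁ ⊂ ... ⊂ Wₙ = ℂⁿ of subspaces with dim Wᵢ = i such that A Wᵢ ⊆ W_{i+1} and A* Wᵢ ⊆ W_{i+1} for all 0 ≤ i ≤ n−1. -/
open Matrix

/-- A matrix is tridiagonal if all entries with |i-j| ≥ 2 vanish. -/
def IsTridiagonal {n : ℕ} (B : Matrix (Fin n) (Fin n) ℂ) : Prop :=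
  ∀ i j : Fin n, 2 ≤ |(i : ℤ) - (j : ℤ)| → B i j = 0

/-- A is unitarily tridiagonalisable. -/
def IsUnitarilyTridiagonalisable {n : ℕ} (A : Matrix (Fin n) (Fin n) ℂ) : Prop :=
  ∃ U ∈ Matrix.unitaryGroup (Fin n) ℂ, IsTridiagonal (U * A * Uᴴ)

/-!
If the rows of a unitary `U` are the conjugates of an orthonormal basis `b`, then
`(U A Uᴴ) i j = ⟪b i, A (b j)⟫`. Relative to the flag `Wₖ = span {b 0, …, b (k-1)}`, the entries
below the subdiagonal vanish exactly when `A Wₖ ⊆ Wₖ₊₁`, and those above the superdiagonal,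
being conjugates of entries of `Aᴴ`, exactly when `Aᴴ Wₖ ⊆ Wₖ₊₁`. Conversely every flag with
`dim Wₖ = k` is the flag of the orthonormal basis obtained by choosing a unit vector in each
line `Wₖ₋₁ᗮ ⊓ Wₖ`.
-/

open Module

namespace Module.Basis

section Semiring

variable {R M : Type*} [Semiring R] [AddCommMonoid M] [Module R M] {n : ℕ}

theorem mem_flag_iff (b : Basis (Fin n) R M) {k : Fin (n + 1)} {x : M} :
    x ∈ b.flag k ↔ ∀ i : Fin n, k ≤ i.castSucc → b.repr x i = 0 := by
  rw [flag, mem_span_image]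
  refine ⟨fun h i hi => ?_, fun h i hi => ?_⟩
  · exact Finsupp.notMem_support_iff.mp fun hmem => (h hmem).not_ge hi
  · by_contra hik
    exact Finsupp.mem_support_iff.mp hi (h i (not_lt.mp hik))

theorem map_flag_castSucc_le_flag_succ_iff (b : Basis (Fin n) R M) (f : M →ₗ[R] M) :
    (∀ k : Fin n, (b.flag k.castSucc).map f ≤ b.flag k.succ) ↔
      ∀ i j : Fin n, (j : ℕ) + 1 < i → b.repr (f (b j)) i = 0 := by
  constructor
  · intro h i j hji
    have hj : b j ∈ b.flag (⟨j + 1, by omega⟩ : Fin n).castSucc :=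
      b.self_mem_flag (Fin.lt_def.mpr (by simp))
    refine b.mem_flag_iff.mp (h _ (Submodule.mem_map_of_mem hj)) i ?_
    simp only [Fin.le_def, Fin.val_succ, Fin.val_castSucc]
    omega
  · intro h k
    rw [Submodule.map_le_iff_le_comap, flag_le_iff]
    intro j hjk
    rw [Submodule.mem_comap, mem_flag_iff]
    intro i hki
    rw [Fin.castSucc_lt_castSucc_iff, Fin.lt_def] at hjk
    rw [Fin.le_def, Fin.val_succ, Fin.val_castSucc] at hki
    exact h i j (by omega)

end Semiring

theorem finrank_flag {K V : Type*} [DivisionRing K] [AddCommGroup V] [Module K V] {n : ℕ}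
    (b : Basis (Fin n) K V) (k : Fin (n + 1)) : finrank K (b.flag k) = k := by
  have := Module.Finite.of_basis b
  induction k using Fin.induction with
  | zero => simp
  | succ k ih =>
    rw [flag_succ, sup_comm, Submodule.finrank_sup_span_singleton (by simp), ih, Fin.val_succ,
      Fin.val_castSucc]

end Module.Basis

namespace OrthonormalBasis

variable {𝕜 E : Type*} [RCLike 𝕜] [NormedAddCommGroup E] [InnerProductSpace 𝕜 E] {n : ℕ}

theorem map_flag_castSucc_le_flag_succ_iff (b : OrthonormalBasis (Fin n) 𝕜 E) (f : E →ₗ[𝕜] E) :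
    (∀ k : Fin n, (b.toBasis.flag k.castSucc).map f ≤ b.toBasis.flag k.succ) ↔
      ∀ i j : Fin n, (j : ℕ) + 1 < i → inner 𝕜 (b i) (f (b j)) = 0 := by
  simp only [b.toBasis.map_flag_castSucc_le_flag_succ_iff, OrthonormalBasis.coe_toBasis,
    OrthonormalBasis.coe_toBasis_repr_apply, OrthonormalBasis.repr_apply_apply]

theorem inner_map_eq_zero_of_two_le_iff_map_flag [FiniteDimensional 𝕜 E]
    (b : OrthonormalBasis (Fin n) 𝕜 E) (f : E →ₗ[𝕜] E) :
    (∀ i j : Fin n, 2 ≤ |(i : ℤ) - j| → inner 𝕜 (b i) (f (b j)) = 0) ↔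
      (∀ k : Fin n, (b.toBasis.flag k.castSucc).map f ≤ b.toBasis.flag k.succ) ∧
        (∀ k : Fin n, (b.toBasis.flag k.castSucc).map f.adjoint ≤ b.toBasis.flag k.succ) := by
  simp only [b.map_flag_castSucc_le_flag_succ_iff, LinearMap.adjoint_inner_right,
    inner_eq_zero_symm (x := f _), le_abs]
  refine ⟨fun h => ⟨fun i j hji => h i j ?_, fun i j hji => h j i ?_⟩, fun ⟨h, h'⟩ i j hij => ?_⟩
  · omega
  · omega
  · rcases hij with hij | hji
    · exact h i j (by omega)
    · exact h' j i (by omega)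

end OrthonormalBasis

section Flag

variable {𝕜 E : Type*} [RCLike 𝕜] [NormedAddCommGroup E] [InnerProductSpace 𝕜 E]
  [FiniteDimensional 𝕜 E] {n : ℕ}

theorem exists_orthonormalBasis_flag_eq (hn : finrank 𝕜 E = n)
    {W : Fin (n + 1) → Submodule 𝕜 E} (hW : Monotone W) (hdim : ∀ k, finrank 𝕜 (W k) = k) :
    ∃ b : OrthonormalBasis (Fin n) 𝕜 E, b.toBasis.flag = W := by
  have hstep (k : Fin n) : ∃ v ∈ (W k.castSucc)ᗮ ⊓ W k.succ, ‖v‖ = 1 := by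
    have hline : finrank 𝕜 ((W k.castSucc)ᗮ ⊓ W k.succ : Submodule 𝕜 E) = 1 :=
      Submodule.finrank_add_inf_finrank_orthogonal' (hW k.castSucc_le_succ) (by simp [hdim])
    obtain ⟨⟨w, hw⟩, hw0⟩ := finrank_pos_iff_exists_ne_zero.mp (hline ▸ one_pos)
    exact ⟨_, Submodule.smul_mem _ (‖w‖⁻¹ : 𝕜) hw, norm_smul_inv_norm (by simpa using hw0)⟩
  choose v hvW hv1 using hstep
  have hperp (i : Fin n) : v i ∈ (W i.castSucc)ᗮ := (Submodule.mem_inf.mp (hvW i)).1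
  have hmem {i : Fin n} {k : Fin (n + 1)} (h : i.castSucc < k) : v i ∈ W k :=
    hW (Fin.castSucc_lt_iff_succ_le.mp h) (Submodule.mem_inf.mp (hvW i)).2
  have hv : Orthonormal 𝕜 v := by
    refine ⟨hv1, fun i j hij => ?_⟩
    rcases lt_or_gt_of_ne hij with h | h
    · exact Submodule.inner_right_of_mem_orthogonal (hmem h) (hperp j)
    · exact Submodule.inner_left_of_mem_orthogonal (hmem h) (hperp i)
  let b := OrthonormalBasis.mk hv
    (hv.linearIndependent.span_eq_top_of_card_eq_finrank' (by simp [hn])).ge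
  refine ⟨b, funext fun k => le_antisymm ((Basis.flag_le_iff _).mpr fun i hi => ?_) fun x hx => ?_⟩
  · simpa [b] using hmem hi
  · refine b.toBasis.mem_flag_iff.mpr fun i hki => ?_
    simpa [b, OrthonormalBasis.repr_apply_apply] using
      Submodule.inner_left_of_mem_orthogonal (hW hki hx) (hperp i)

end Flag

section UnitaryMatrix

variable {𝕜 ι : Type*} [RCLike 𝕜] [Fintype ι] [DecidableEq ι]

theorem OrthonormalBasis.conjTranspose_toMatrix_mul_mul_toMatrix_apply
    (b : OrthonormalBasis ι 𝕜 (EuclideanSpace 𝕜 ι)) (A : Matrix ι ι 𝕜) (i j : ι) :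
    (((EuclideanSpace.basisFun ι 𝕜).toBasis.toMatrix b)ᴴ * A *
        (EuclideanSpace.basisFun ι 𝕜).toBasis.toMatrix b) i j =
      inner 𝕜 (b i) (toEuclideanLin A (b j)) := by
  simp only [Matrix.mul_apply, conjTranspose_apply, Basis.toMatrix_apply,
    OrthonormalBasis.coe_toBasis_repr_apply, EuclideanSpace.basisFun_repr, RCLike.star_def,
    Finset.sum_mul, EuclideanSpace.inner_eq_star_dotProduct, dotProduct, ofLp_toLpLin,
    toLin'_apply, mulVec, Pi.star_apply]
  rw [Finset.sum_comm]
  exact Finset.sum_congr rfl fun _ _ => Finset.sum_congr rfl fun _ _ => by ring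

theorem exists_orthonormalBasis_toMatrix_eq {V : Matrix ι ι 𝕜} (hV : V ∈ unitaryGroup ι 𝕜) :
    ∃ b : OrthonormalBasis ι 𝕜 (EuclideanSpace 𝕜 ι),
      (EuclideanSpace.basisFun ι 𝕜).toBasis.toMatrix b = V := by
  have hv : Orthonormal 𝕜 fun j => WithLp.toLp 2 (Vᵀ j) := by
    rw [orthonormal_iff_ite]
    intro i j
    rw [← one_apply, ← mem_unitaryGroup_iff'.mp hV]
    simp [EuclideanSpace.inner_eq_star_dotProduct, Matrix.mul_apply, dotProduct, mul_comm]
  refine ⟨.mk hv (hv.linearIndependent.span_eq_top_of_card_eq_finrank' (by simp)).ge, ?_⟩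
  ext i j
  simp [Basis.toMatrix_apply]

end UnitaryMatrix

theorem isUnitarilyTridiagonalisable_iff_exists_orthonormalBasis {n : ℕ}
    (A : Matrix (Fin n) (Fin n) ℂ) :
    IsUnitarilyTridiagonalisable A ↔ ∃ b : OrthonormalBasis (Fin n) ℂ (EuclideanSpace ℂ (Fin n)),
      ∀ i j : Fin n, 2 ≤ |(i : ℤ) - j| → inner ℂ (b i) (toEuclideanLin A (b j)) = 0 := by
  simp only [IsUnitarilyTridiagonalisable, IsTridiagonal,
    ← OrthonormalBasis.conjTranspose_toMatrix_mul_mul_toMatrix_apply]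
  constructor
  · rintro ⟨U, hU, hUA⟩
    obtain ⟨b, hb⟩ := exists_orthonormalBasis_toMatrix_eq (Unitary.star_mem hU)
    exact ⟨b, by rwa [hb, star_eq_conjTranspose, conjTranspose_conjTranspose]⟩
  · rintro ⟨b, hb⟩
    have hM := (EuclideanSpace.basisFun (Fin n) ℂ).toMatrix_orthonormalBasis_mem_unitary b
    exact ⟨_, Unitary.star_mem hM, by rwa [star_eq_conjTranspose, conjTranspose_conjTranspose]⟩

theorem unitary_tridiagonalisable_iff_flag {n : ℕ} (A : Matrix (Fin n) (Fin n) ℂ) :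
    IsUnitarilyTridiagonalisable A ↔
      ∃ W : Fin (n + 1) → Submodule ℂ (EuclideanSpace ℂ (Fin n)),
        Monotone W ∧ W 0 = ⊥ ∧ W (Fin.last n) = ⊤ ∧
        (∀ i : Fin (n + 1), Module.finrank ℂ (W i) = (i : ℕ)) ∧
        (∀ i : Fin n, (W i.castSucc).map (Matrix.toEuclideanLin A) ≤ W i.succ) ∧
        (∀ i : Fin n, (W i.castSucc).map (Matrix.toEuclideanLin Aᴴ) ≤ W i.succ) := by
  simp only [isUnitarilyTridiagonalisable_iff_exists_orthonormalBasis,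
    OrthonormalBasis.inner_map_eq_zero_of_two_le_iff_map_flag,
    toEuclideanLin_conjTranspose_eq_adjoint]
  constructor
  · rintro ⟨b, hb⟩
    exact ⟨b.toBasis.flag, b.toBasis.flag_mono, b.toBasis.flag_zero, b.toBasis.flag_last,
      b.toBasis.finrank_flag, hb⟩
  · rintro ⟨W, hW, -, -, hdim, hA⟩
    obtain ⟨b, rfl⟩ := exists_orthonormalBasis_flag_eq finrank_euclideanSpace_fin hW hdim
    exact ⟨b, hA⟩
end

section
/- Let A be a 4×4 complex matrix. If A and A* have a common eigenvector, then A is unitarily tridiagonalisable. -/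
open Matrix

/-!
Conjugating by a unitary whose last column is a normalised common eigenvector `u` of `A` and `Aᴴ`
makes both the last column and the last row of `A` vanish off the diagonal, because
`A u = μ u` and `Aᴴ u = ν u`. The matrix is then block diagonal, and a unitary
tridiagonalising its `3 × 3` block, extended by `1`, tridiagonalises `A`.
-/

section UnitaryConj

variable {𝕜 ι : Type*} [RCLike 𝕜] [Fintype ι] [DecidableEq ι]

theorem OrthonormalBasis.exists_apply_eq {E : Type*} [NormedAddCommGroup E]
    [InnerProductSpace 𝕜 E] [FiniteDimensional 𝕜 E]
    (hcard : Module.finrank 𝕜 E = Fintype.card ι) {u : E} (hu : ‖u‖ = 1) (k : ι) :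
    ∃ b : OrthonormalBasis ι 𝕜 E, b k = u := by
  have hon : Orthonormal 𝕜 (({k} : Set ι).domRestrict fun _ => u) := by
    rw [orthonormal_iff_ite]
    rintro ⟨i, rfl⟩ ⟨j, rfl⟩
    simp [inner_self_eq_norm_sq_to_K, hu]
  obtain ⟨b, hb⟩ := hon.exists_orthonormalBasis_extension_of_card_eq hcard
  exact ⟨b, hb k rfl⟩

theorem Matrix.exists_mem_unitaryGroup_col_eq {u : EuclideanSpace 𝕜 ι} (hu : ‖u‖ = 1) (k : ι) :
    ∃ P ∈ unitaryGroup ι 𝕜, P.col k = u := by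
  obtain ⟨b, hb⟩ := OrthonormalBasis.exists_apply_eq (𝕜 := 𝕜) (by simp) hu k
  refine ⟨_, (EuclideanSpace.basisFun ι 𝕜).toMatrix_orthonormalBasis_mem_unitary b, ?_⟩
  ext i
  simp [Module.Basis.toMatrix_apply, hb]

theorem Matrix.conjTranspose_mul_mul_mulVec_single {P A : Matrix ι ι 𝕜}
    (hP : P ∈ unitaryGroup ι 𝕜) {k : ι} {u : ι → 𝕜} (hcol : P.col k = u) {μ : 𝕜}
    (hu : A *ᵥ u = μ • u) :
    (Pᴴ * A * P) *ᵥ Pi.single k 1 = μ • Pi.single k 1 := by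
  have hPk : P *ᵥ Pi.single k 1 = u := by rw [mulVec_single_one, hcol]
  have hPu : Pᴴ *ᵥ u = Pi.single k 1 := by
    rw [← hPk, mulVec_mulVec, ← star_eq_conjTranspose, mem_unitaryGroup_iff'.mp hP, one_mulVec]
  rw [← mulVec_mulVec, hPk, ← mulVec_mulVec, hu, mulVec_smul, hPu]

theorem Matrix.apply_eq_zero_of_mulVec_single_eq_smul {M : Matrix ι ι 𝕜} {k : ι} {μ : 𝕜}
    (hM : M *ᵥ Pi.single k 1 = μ • Pi.single k 1) {i : ι} (hi : i ≠ k) : M i k = 0 := by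
  simpa [mulVec_single_one, hi] using congrFun hM i

theorem Matrix.exists_mem_unitaryGroup_row_col_eq_zero {A : Matrix ι ι 𝕜} {v : ι → 𝕜}
    (hv : v ≠ 0) {μ ν : 𝕜} (hAv : A *ᵥ v = μ • v) (hAHv : Aᴴ *ᵥ v = ν • v) (k : ι) :
    ∃ P ∈ unitaryGroup ι 𝕜, ∀ i ≠ k, (Pᴴ * A * P) i k = 0 ∧ (Pᴴ * A * P) k i = 0 := by
  set w : EuclideanSpace 𝕜 ι := WithLp.toLp 2 v
  have hw : w ≠ 0 := by simpa [w] using hv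
  obtain ⟨P, hP, hcol⟩ := exists_mem_unitaryGroup_col_eq (norm_smul_inv_norm (𝕜 := 𝕜) hw) k
  have hcol' : P.col k = (‖w‖⁻¹ : 𝕜) • v := hcol
  have eigen_normalize {B : Matrix ι ι 𝕜} {c : 𝕜} (hB : B *ᵥ v = c • v) :
      B *ᵥ ((‖w‖⁻¹ : 𝕜) • v) = c • ((‖w‖⁻¹ : 𝕜) • v) := by
    rw [mulVec_smul, hB, smul_comm]
  have hconjH : (Pᴴ * A * P)ᴴ = Pᴴ * Aᴴ * P := by
    simp only [conjTranspose_mul, conjTranspose_conjTranspose, Matrix.mul_assoc]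
  refine ⟨P, hP, fun i hi => ⟨?_, ?_⟩⟩
  · exact apply_eq_zero_of_mulVec_single_eq_smul
      (conjTranspose_mul_mul_mulVec_single hP hcol' (eigen_normalize hAv)) hi
  · have := apply_eq_zero_of_mulVec_single_eq_smul
      (conjTranspose_mul_mul_mulVec_single hP hcol' (eigen_normalize hAHv)) hi
    rwa [← hconjH, conjTranspose_apply, star_eq_zero] at this

end UnitaryConj

section Deflation

variable {n : ℕ}

theorem IsUnitarilyTridiagonalisable.of_conjTranspose_mul_mul {A P : Matrix (Fin n) (Fin n) ℂ}
    (hP : P ∈ unitaryGroup (Fin n) ℂ) (h : IsUnitarilyTridiagonalisable (Pᴴ * A * P)) :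
    IsUnitarilyTridiagonalisable A := by
  obtain ⟨W, hW, hT⟩ := h
  refine ⟨W * Pᴴ, mul_mem hW (Unitary.star_mem hP), ?_⟩
  simpa only [conjTranspose_mul, conjTranspose_conjTranspose, Matrix.mul_assoc] using hT

theorem IsTridiagonal.reindex_fromBlocks {T : Matrix (Fin n) (Fin n) ℂ} (hT : IsTridiagonal T)
    (D : Matrix (Fin 1) (Fin 1) ℂ) :
    IsTridiagonal (reindex finSumFinEquiv finSumFinEquiv (fromBlocks T 0 0 D)) := by
  intro i j hij
  obtain ⟨a, rfl⟩ := finSumFinEquiv.surjective i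
  obtain ⟨b, rfl⟩ := finSumFinEquiv.surjective j
  rcases a with a | a <;> rcases b with b | b
  · simpa using hT a b (by simpa using hij)
  · simp
  · simp
  · simp [Subsingleton.elim a b] at hij

theorem IsUnitarilyTridiagonalisable.reindex_fromBlocks {B : Matrix (Fin n) (Fin n) ℂ}
    (hB : IsUnitarilyTridiagonalisable B) (D : Matrix (Fin 1) (Fin 1) ℂ) :
    IsUnitarilyTridiagonalisable (reindex finSumFinEquiv finSumFinEquiv (fromBlocks B 0 0 D)) := by
  obtain ⟨V, hV, hT⟩ := hB
  have hVV : V * Vᴴ = 1 := mem_unitaryGroup_iff.mp hV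
  refine ⟨reindex finSumFinEquiv finSumFinEquiv (fromBlocks V 0 0 1), ?_, ?_⟩
  · rw [mem_unitaryGroup_iff, star_eq_conjTranspose]
    simp [reindex_apply, conjTranspose_submatrix, fromBlocks_conjTranspose, fromBlocks_multiply,
      hVV]
  · simpa [reindex_apply, conjTranspose_submatrix, fromBlocks_conjTranspose, fromBlocks_multiply]
      using hT.reindex_fromBlocks D

theorem Matrix.eq_reindex_fromBlocks_of_row_col_last_eq_zero
    {M : Matrix (Fin (n + 1)) (Fin (n + 1)) ℂ}
    (hM : ∀ i ≠ Fin.last n, M i (Fin.last n) = 0 ∧ M (Fin.last n) i = 0) :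
    M = reindex finSumFinEquiv finSumFinEquiv (fromBlocks (M.submatrix Fin.castSucc Fin.castSucc)
      0 0 (of fun _ _ => M (Fin.last n) (Fin.last n))) := by
  have hcast (a : Fin n) : Fin.castAdd 1 a = a.castSucc := rfl
  have hlast (a : Fin 1) : Fin.natAdd n a = Fin.last n := by ext; simp [Subsingleton.elim a 0]
  ext i j
  obtain ⟨a, rfl⟩ := finSumFinEquiv.surjective i
  obtain ⟨b, rfl⟩ := finSumFinEquiv.surjective j
  rcases a with a | a <;> rcases b with b | b
  · simp [hcast]
  · simp [hcast, hlast, (hM _ (Fin.castSucc_ne_last a)).1]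
  · simp [hcast, hlast, (hM _ (Fin.castSucc_ne_last b)).2]
  · simp [hlast]

theorem IsUnitarilyTridiagonalisable.of_row_col_last_eq_zero
    {M : Matrix (Fin (n + 1)) (Fin (n + 1)) ℂ}
    (hM : ∀ i ≠ Fin.last n, M i (Fin.last n) = 0 ∧ M (Fin.last n) i = 0)
    (hB : IsUnitarilyTridiagonalisable (M.submatrix Fin.castSucc Fin.castSucc)) :
    IsUnitarilyTridiagonalisable M := by
  rw [eq_reindex_fromBlocks_of_row_col_last_eq_zero hM]
  exact hB.reindex_fromBlocks _

end Deflation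

theorem tridiagonalisable_of_common_eigenvector
    (h3 : ∀ B : Matrix (Fin 3) (Fin 3) ℂ, IsUnitarilyTridiagonalisable B)
    (A : Matrix (Fin 4) (Fin 4) ℂ)
    (hcommon : ∃ v : Fin 4 → ℂ, v ≠ 0 ∧ (∃ μ : ℂ, A.mulVec v = μ • v) ∧
      (∃ ν : ℂ, Aᴴ.mulVec v = ν • v)) :
    IsUnitarilyTridiagonalisable A := by
  obtain ⟨v, hv, ⟨μ, hAv⟩, ⟨ν, hAHv⟩⟩ := hcommon
  obtain ⟨P, hP, hPAP⟩ := exists_mem_unitaryGroup_row_col_eq_zero hv hAv hAHv (Fin.last 3)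
  exact .of_conjTranspose_mul_mul hP (.of_row_col_last_eq_zero hPAP (h3 _))
end

section
/- Let A be the 4×4 nilpotent Jordan block (with ones on the superdiagonal and zeros elsewhere). For every (t₀,t₁,t₂) ∈ ℂ³ with (t₀,t₁,t₂) ≠ (0,0,0), the matrix t₀I + t₁A + t₂A* has rank ≥ 3. -/
open Matrix

/-- The 4×4 nilpotent Jordan block: ones on the superdiagonal, zeros elsewhere. -/
def jordanBlock4 : Matrix (Fin 4) (Fin 4) ℂ :=
  Matrix.of fun i j => if (j : ℕ) = (i : ℕ) + 1 then 1 else 0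

private lemma pencil_eqs (t₀ t₁ t₂ : ℂ) (v : Fin 4 → ℂ)
    (hv : (t₀ • (1 : Matrix (Fin 4) (Fin 4) ℂ) + t₁ • jordanBlock4 + t₂ • jordanBlock4ᴴ).mulVec v = 0) :
    (t₀ * v 0 + t₁ * v 1 = 0) ∧ (t₂ * v 0 + t₀ * v 1 + t₁ * v 2 = 0) ∧
    (t₂ * v 1 + t₀ * v 2 + t₁ * v 3 = 0) ∧ (t₂ * v 2 + t₀ * v 3 = 0) := by
  have h0 := congrFun hv 0
  have h1 := congrFun hv 1
  have h2 := congrFun hv 2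
  have h3 := congrFun hv 3
  simp [mulVec, dotProduct, Fin.sum_univ_four, jordanBlock4, Matrix.one_apply,
    conjTranspose_apply, show ((3:Fin 4):ℕ) = 3 from rfl, show ((2:Fin 4):ℕ) = 2 from rfl,
    show ((1:Fin 4):ℕ) = 1 from rfl, show ((0:Fin 4):ℕ) = 0 from rfl] at h0 h1 h2 h3
  exact ⟨by linear_combination h0, by linear_combination h1, by linear_combination h2,
    by linear_combination h3⟩

theorem rank_ge_three_of_pencil (t₀ t₁ t₂ : ℂ) (h : ¬(t₀ = 0 ∧ t₁ = 0 ∧ t₂ = 0)) :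
    3 ≤ (t₀ • (1 : Matrix (Fin 4) (Fin 4) ℂ) + t₁ • jordanBlock4 + t₂ • jordanBlock4ᴴ).rank := by
  set M := t₀ • (1 : Matrix (Fin 4) (Fin 4) ℂ) + t₁ • jordanBlock4 + t₂ • jordanBlock4ᴴ with hM
  have key : ∃ i : Fin 4, ∀ v : Fin 4 → ℂ, M.mulVec v = 0 → v i = 0 → v = 0 := by
    by_cases ht1 : t₁ ≠ 0
    · refine ⟨0, fun v hv h0 => ?_⟩
      obtain ⟨e0, e1, e2, e3⟩ := pencil_eqs t₀ t₁ t₂ v hv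
      have hv1 : v 1 = 0 := by
        have : t₁ * v 1 = 0 := by linear_combination e0 - t₀ * h0
        exact (mul_eq_zero.mp this).resolve_left ht1
      have hv2 : v 2 = 0 := by
        have : t₁ * v 2 = 0 := by linear_combination e1 - t₂ * h0 - t₀ * hv1
        exact (mul_eq_zero.mp this).resolve_left ht1
      have hv3 : v 3 = 0 := by
        have : t₁ * v 3 = 0 := by linear_combination e2 - t₂ * hv1 - t₀ * hv2
        exact (mul_eq_zero.mp this).resolve_left ht1
      funext i
      fin_cases i <;> assumption
    · push_neg at ht1
      by_cases ht2 : t₂ ≠ 0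
      · refine ⟨3, fun v hv h3 => ?_⟩
        obtain ⟨e0, e1, e2, e3⟩ := pencil_eqs t₀ t₁ t₂ v hv
        have hv2 : v 2 = 0 := by
          have : t₂ * v 2 = 0 := by linear_combination e3 - t₀ * h3
          exact (mul_eq_zero.mp this).resolve_left ht2
        have hv1 : v 1 = 0 := by
          have : t₂ * v 1 = 0 := by linear_combination e2 - t₀ * hv2 - t₁ * h3
          exact (mul_eq_zero.mp this).resolve_left ht2
        have hv0 : v 0 = 0 := by
          have : t₂ * v 0 = 0 := by linear_combination e1 - t₀ * hv1 - t₁ * hv2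
          exact (mul_eq_zero.mp this).resolve_left ht2
        funext i
        fin_cases i <;> assumption
      · push_neg at ht2
        have ht0 : t₀ ≠ 0 := by
          intro ht0; exact h ⟨ht0, ht1, ht2⟩
        refine ⟨0, fun v hv h0 => ?_⟩
        obtain ⟨e0, e1, e2, e3⟩ := pencil_eqs t₀ t₁ t₂ v hv
        have hv1 : v 1 = 0 := by
          have : t₀ * v 1 = 0 := by linear_combination e1 - t₂ * h0 - t₁ * ht1 * 0 - v 2 * ht1
          exact (mul_eq_zero.mp this).resolve_left ht0
        have hv2 : v 2 = 0 := by
          have : t₀ * v 2 = 0 := by linear_combination e2 - t₂ * hv1 - v 3 * ht1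
          exact (mul_eq_zero.mp this).resolve_left ht0
        have hv3 : v 3 = 0 := by
          have : t₀ * v 3 = 0 := by linear_combination e3 - t₂ * hv2
          exact (mul_eq_zero.mp this).resolve_left ht0
        funext i
        fin_cases i <;> assumption
  obtain ⟨i, hi⟩ := key
  have hker : Module.finrank ℂ (LinearMap.ker M.mulVecLin) ≤ 1 := by
    let f : LinearMap.ker M.mulVecLin →ₗ[ℂ] ℂ :=
      (LinearMap.proj i).comp (Submodule.subtype _)
    have hf : Function.Injective f := by
      intro x y hxy
      have hmem : (x : Fin 4 → ℂ) - y ∈ LinearMap.ker M.mulVecLin :=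
        sub_mem x.2 y.2
      have hz : ((x : Fin 4 → ℂ) - y) i = 0 := by
        simpa [f, sub_eq_zero] using hxy
      have := hi _ (by simpa [Matrix.mulVecLin_apply] using hmem) hz
      exact Subtype.ext (sub_eq_zero.mp this)
    simpa using LinearMap.finrank_le_finrank_of_injective hf
  have hrn := LinearMap.finrank_range_add_finrank_ker M.mulVecLin
  have : M.rank + Module.finrank ℂ (LinearMap.ker M.mulVecLin) = 4 := by
    simpa [Matrix.rank] using hrn
  omega
end

section
/- Let A ∈ M(4,ℂ) with A and A* having no common eigenvector, and let v ≠ 0 satisfy dim span{v,Av,A*v} = 2 and dim(W(v) + A·W(v)) = 2 (i.e. W(v) + A·W(v) = W(v)). Then either W(v) is invariant under both A and A*, or the flag 0 ⊂ ℂv ⊂ W(v) ⊂ W(v)+A*·W(v) ⊂ ℂ⁴ witnesses unitary tridiagonalisability of A. -/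
/-!
Since `dim (W + A W) = dim W`, the plane `W` is `A`-invariant. If it is not also
`Aᴴ`-invariant, then `W + Aᴴ W` is strictly larger than `W`, but it has dimension at most
`2 · dim W - 1 = 3`: either `Aᴴ v ≠ 0` lies in `W ∩ Aᴴ W`, or `Aᴴ` kills `v ∈ W` and
`dim Aᴴ W < dim W`. So `0 ⊂ ℂv ⊂ W ⊂ W + Aᴴ W ⊂ ℂ⁴` is a complete flag mapped one step up by
both `A` and `Aᴴ`. In an orthonormal basis adapted to that flag, `⟪eᵢ, A eⱼ⟫` vanishes for
`i ≥ j + 2` because `A eⱼ` stays in the `(j + 2)`-th flag space, and for `j ≥ i + 2` because it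
equals `⟪Aᴴ eᵢ, eⱼ⟫`.
-/

open Matrix

open Module

section Flag

variable {𝕜 E : Type*} [RCLike 𝕜] [NormedAddCommGroup E] [InnerProductSpace 𝕜 E] {n : ℕ}
  {V : Fin (n + 1) → Submodule 𝕜 E}

theorem exists_orthonormalBasis_mem_flag [FiniteDimensional 𝕜 E] (hE : finrank 𝕜 E = n)
    (hV : Monotone V) (hVrank : ∀ k, finrank 𝕜 (V k) = k) :
    ∃ e : OrthonormalBasis (Fin n) 𝕜 E, ∀ i, e i ∈ (V i.castSucc)ᗮ ⊓ V i.succ := by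
  have hunit : ∀ i : Fin n, ∃ x ∈ (V i.castSucc)ᗮ ⊓ V i.succ, ‖x‖ = 1 := by
    intro i
    have hrank := Submodule.finrank_add_inf_finrank_orthogonal (hV i.castSucc_le_succ)
    rw [hVrank, hVrank, Fin.val_castSucc, Fin.val_succ] at hrank
    obtain ⟨x, hx, hx0⟩ := Submodule.exists_mem_ne_zero_of_ne_bot
      ((Submodule.one_le_finrank_iff (S := (V i.castSucc)ᗮ ⊓ V i.succ)).mp (by omega))
    exact ⟨(‖x‖⁻¹ : 𝕜) • x, Submodule.smul_mem _ _ hx, norm_smul_inv_norm hx0⟩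
  choose e he hnorm using hunit
  have horth : Orthonormal 𝕜 e := by
    refine ⟨hnorm, fun i j hij => ?_⟩
    have key : ∀ {i j : Fin n}, i < j → inner 𝕜 (e i) (e j) = 0 := fun hij =>
      Submodule.inner_right_of_mem_orthogonal
        (hV (Fin.succ_le_castSucc_iff.mpr hij) (he _).2) (he _).1
    rcases hij.lt_or_gt with h | h
    · exact key h
    · exact inner_eq_zero_symm.mp (key h)
  refine ⟨OrthonormalBasis.mk horth
    (horth.linearIndependent.span_eq_top_of_card_eq_finrank' (by simp [hE])).ge, fun i => ?_⟩
  rw [OrthonormalBasis.coe_mk]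
  exact he i

theorem inner_map_eq_zero_of_mem_flag {f : E →ₗ[𝕜] E} (hV : Monotone V) {e : Fin n → E}
    (he : ∀ i, e i ∈ (V i.castSucc)ᗮ ⊓ V i.succ)
    (hf : ∀ k : Fin n, (V k.castSucc).map f ≤ V k.succ) {i j : Fin n} (hij : (j : ℕ) + 1 < i) :
    inner 𝕜 (e i) (f (e j)) = 0 := by
  let k : Fin n := ⟨j + 1, by omega⟩
  have hfej : f (e j) ∈ V k.succ := hf k ⟨e j, (he j).2, rfl⟩
  exact Submodule.inner_left_of_mem_orthogonal
    (hV (Fin.le_def.mpr (by simpa [k] using hij)) hfej) (he i).1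

end Flag

theorem OrthonormalBasis.toMatrix_mul_mul_conjTranspose {n : ℕ} (A : Matrix (Fin n) (Fin n) ℂ)
    (e : OrthonormalBasis (Fin n) ℂ (EuclideanSpace ℂ (Fin n))) :
    e.toBasis.toMatrix (EuclideanSpace.basisFun (Fin n) ℂ) * A *
        (e.toBasis.toMatrix (EuclideanSpace.basisFun (Fin n) ℂ))ᴴ =
      LinearMap.toMatrix e.toBasis e.toBasis A.toEuclideanLin := by
  set b := EuclideanSpace.basisFun (Fin n) ℂ
  have hinv : e.toBasis.toMatrix b * b.toBasis.toMatrix e = 1 := by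
    simpa using e.toBasis.toMatrix_mul_toMatrix_flip b.toBasis
  have hU : (e.toBasis.toMatrix b)ᴴ = b.toBasis.toMatrix e := calc
    _ = (e.toBasis.toMatrix b)ᴴ * (e.toBasis.toMatrix b * b.toBasis.toMatrix e) := by
      rw [hinv, mul_one]
    _ = b.toBasis.toMatrix e := by
      rw [← mul_assoc, e.toMatrix_orthonormalBasis_conjTranspose_mul_self, one_mul]
  rw [hU, ← basis_toMatrix_mul_linearMap_toMatrix_mul_basis_toMatrix e.toBasis b.toBasis
    e.toBasis b.toBasis, toEuclideanLin_eq_toLin_orthonormal, LinearMap.toMatrix_toLin]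
  simp only [OrthonormalBasis.coe_toBasis]

theorem isUnitarilyTridiagonalisable_of_flag {n : ℕ} (A : Matrix (Fin n) (Fin n) ℂ)
    (V : Fin (n + 1) → Submodule ℂ (Fin n → ℂ)) (hV : Monotone V)
    (hVrank : ∀ k, finrank ℂ (V k) = k)
    (hA : ∀ k : Fin n, (V k.castSucc).map A.mulVecLin ≤ V k.succ)
    (hAH : ∀ k : Fin n, (V k.castSucc).map Aᴴ.mulVecLin ≤ V k.succ) :
    IsUnitarilyTridiagonalisable A := by
  let toEuclidean : (Fin n → ℂ) ≃ₗ[ℂ] EuclideanSpace ℂ (Fin n) :=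
    (WithLp.linearEquiv 2 ℂ (Fin n → ℂ)).symm
  let V' := fun k => (V k).map toEuclidean.toLinearMap
  have hV' : Monotone V' := fun _ _ h => Submodule.map_mono (hV h)
  have hmap : ∀ B : Matrix (Fin n) (Fin n) ℂ,
      (∀ k : Fin n, (V k.castSucc).map B.mulVecLin ≤ V k.succ) →
      ∀ k : Fin n, (V' k.castSucc).map B.toEuclideanLin ≤ V' k.succ := by
    rintro B hB k _ ⟨_, ⟨y, hy, rfl⟩, rfl⟩
    exact ⟨B *ᵥ y, hB k ⟨y, hy, rfl⟩, rfl⟩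
  obtain ⟨e, he⟩ := exists_orthonormalBasis_mem_flag (V := V') (by simp) hV'
    (fun k => (LinearEquiv.finrank_map_eq _ _).trans (hVrank k))
  refine ⟨_, e.toMatrix_orthonormalBasis_mem_unitary (EuclideanSpace.basisFun (Fin n) ℂ),
    fun i j hij => ?_⟩
  rw [OrthonormalBasis.toMatrix_mul_mul_conjTranspose, LinearMap.toMatrix_apply,
    OrthonormalBasis.coe_toBasis_repr_apply, OrthonormalBasis.repr_apply_apply,
    OrthonormalBasis.coe_toBasis]
  rcases le_abs'.mp hij with h | h
  · rw [← LinearMap.adjoint_inner_left, ← toEuclideanLin_conjTranspose_eq_adjoint,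
      inner_eq_zero_symm]
    exact inner_map_eq_zero_of_mem_flag hV' he (hmap _ hAH) (by omega)
  · exact inner_map_eq_zero_of_mem_flag hV' he (hmap _ hA) (by omega)

theorem Submodule.finrank_sup_map_lt_two_mul {K V : Type*} [Field K] [AddCommGroup V] [Module K V]
    [FiniteDimensional K V] (g : V →ₗ[K] V) {W : Submodule K V} {v : V} (hv : v ≠ 0)
    (hvW : v ∈ W) (hgvW : g v ∈ W) :
    finrank K ↥(W ⊔ W.map g) < 2 * finrank K W := by
  have hsup := Submodule.finrank_add_le_finrank_add_finrank W (W.map g)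
  by_cases hgv : g v = 0
  · have hker : 1 ≤ finrank K (g.domRestrict W).ker :=
      Submodule.one_le_finrank_iff.mpr <| (Submodule.ne_bot_iff _).mpr
        ⟨⟨v, hvW⟩, hgv, by simpa using hv⟩
    have hrank := LinearMap.finrank_range_add_finrank_ker (g.domRestrict W)
    rw [LinearMap.range_domRestrict] at hrank
    omega
  · have hinf : 1 ≤ finrank K ↥(W ⊓ W.map g) :=
      Submodule.one_le_finrank_iff.mpr <| (Submodule.ne_bot_iff _).mpr
        ⟨g v, ⟨hgvW, Submodule.mem_map_of_mem hvW⟩, hgv⟩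
    have hmap := Submodule.finrank_map_le g W
    have hdim := Submodule.finrank_sup_add_finrank_inf_eq W (W.map g)
    omega

theorem dichotomy_of_W3_dim_two_general (A : Matrix (Fin 4) (Fin 4) ℂ)
    (v : Fin 4 → ℂ) (hv : v ≠ 0)
    (W : Submodule ℂ (Fin 4 → ℂ))
    (hWdef : W = Submodule.span ℂ {v, A.mulVec v, Aᴴ.mulVec v})
    (hWdim : Module.finrank ℂ W = 2)
    (hW3dim : Module.finrank ℂ (W ⊔ W.map A.mulVecLin : Submodule ℂ (Fin 4 → ℂ)) = 2) :
    (W.map A.mulVecLin ≤ W ∧ W.map Aᴴ.mulVecLin ≤ W) ∨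
    (((Submodule.span ℂ {v}).map A.mulVecLin ≤ W ∧
      (Submodule.span ℂ {v}).map Aᴴ.mulVecLin ≤ W ∧
      W.map A.mulVecLin ≤ W ⊔ W.map Aᴴ.mulVecLin ∧
      W.map Aᴴ.mulVecLin ≤ W ⊔ W.map Aᴴ.mulVecLin) ∧
     IsUnitarilyTridiagonalisable A) := by
  have hvW : v ∈ W := hWdef ▸ Submodule.subset_span (by simp)
  have hAvW : A *ᵥ v ∈ W := hWdef ▸ Submodule.subset_span (by simp)
  have hAHvW : Aᴴ *ᵥ v ∈ W := hWdef ▸ Submodule.subset_span (by simp)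
  have hAW : W.map A.mulVecLin ≤ W := sup_eq_left.mp
    (Submodule.eq_of_le_of_finrank_eq le_sup_left (hWdim.trans hW3dim.symm)).symm
  by_cases hAHW : W.map Aᴴ.mulVecLin ≤ W
  · exact .inl ⟨hAW, hAHW⟩
  set W₃ := W ⊔ W.map Aᴴ.mulVecLin
  have hW₃ : finrank ℂ W₃ = 3 := by
    have hlt : finrank ℂ W₃ < 2 * finrank ℂ W :=
      Submodule.finrank_sup_map_lt_two_mul Aᴴ.mulVecLin hv hvW hAHvW
    have hgt : finrank ℂ W < finrank ℂ W₃ :=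
      Submodule.finrank_lt_finrank_of_lt (left_lt_sup.mpr hAHW)
    omega
  have hvA : (Submodule.span ℂ {v}).map A.mulVecLin ≤ W := by simpa [Submodule.map_span_le]
  have hvAH : (Submodule.span ℂ {v}).map Aᴴ.mulVecLin ≤ W := by simpa [Submodule.map_span_le]
  refine .inr ⟨⟨hvA, hvAH, hAW.trans le_sup_left, le_sup_right⟩, ?_⟩
  refine isUnitarilyTridiagonalisable_of_flag A ![⊥, Submodule.span ℂ {v}, W, W₃, ⊤]
    (Fin.monotone_iff_le_succ.mpr fun k => ?_) (fun k => ?rank) (fun k => ?_) (fun k => ?_)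
  case rank =>
    fin_cases k
    · exact finrank_bot ℂ _
    · exact finrank_span_singleton hv
    · exact hWdim
    · exact hW₃
    · exact finrank_top ℂ _ |>.trans (Module.finrank_fin_fun ℂ)
  all_goals fin_cases k <;> simp [hvW, hvA, hvAH, hAW.trans le_sup_left, W₃]

theorem dichotomy_of_W3_dim_two (A : Matrix (Fin 4) (Fin 4) ℂ)
    (hcommon : ¬ ∃ v : Fin 4 → ℂ, v ≠ 0 ∧ (∃ μ : ℂ, A.mulVec v = μ • v) ∧
      (∃ ν : ℂ, Aᴴ.mulVec v = ν • v))
    (v : Fin 4 → ℂ) (hv : v ≠ 0)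
    (W : Submodule ℂ (Fin 4 → ℂ))
    (hWdef : W = Submodule.span ℂ {v, A.mulVec v, Aᴴ.mulVec v})
    (hWdim : Module.finrank ℂ W = 2)
    (hW3dim : Module.finrank ℂ (W ⊔ W.map A.mulVecLin : Submodule ℂ (Fin 4 → ℂ)) = 2) :
    (W.map A.mulVecLin ≤ W ∧ W.map Aᴴ.mulVecLin ≤ W) ∨
    (((Submodule.span ℂ {v}).map A.mulVecLin ≤ W ∧
      (Submodule.span ℂ {v}).map Aᴴ.mulVecLin ≤ W ∧
      W.map A.mulVecLin ≤ W ⊔ W.map Aᴴ.mulVecLin ∧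
      W.map Aᴴ.mulVecLin ≤ W ⊔ W.map Aᴴ.mulVecLin) ∧
     IsUnitarilyTridiagonalisable A) :=
  dichotomy_of_W3_dim_two_general A v hv W hWdef hWdim hW3dim
end
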